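/- arXiv:2312.01076 — 3 statements merged into one kernel-verified Lean document; each statement's English description precedes it below -/
import Mathlib

section
/- For any integer k, nonnegative integer r, and real γ, |∑_{j ∈ D_b(r)} e(kjγ)| ≤ 2^{r+1} · ∏_{d=0}^{r} (1 − π·‖k·b^d·γ‖²). -/
/-- Distance from a real number to the nearest integer. -/
noncomputable def nearestIntDist (y : ℝ) : ℝ := |y - round y|

/-- `e(x) = exp(2πix)`. -/
noncomputable def eexp (x : ℝ) : ℂ := Complex.exp (2 * Real.pi * Complex.I * x)

/-! Expanding `∏_{d ≤ r} (1 + e(θ_d))` over subsets of `{0,…,r}` gives the digit sum with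
`θ_d = k b^d γ`, so its modulus is `∏_d |1 + e(θ_d)| = ∏_d 2 |cos πθ_d|`. Shifting `θ_d` by an
integer, `|cos πθ| = cos (π‖θ‖)`, and for `0 ≤ x ≤ 1/2` the half-angle formula
`cos πx = 1 - 2 sin² (πx/2)` with `sin u ≥ u - u³/6` gives `cos πx ≤ 1 - πx²`. -/

open Real Finset

lemma cos_pi_mul_le_one_sub_pi_mul_sq {x : ℝ} (hx : |x| ≤ 1 / 2) :
    cos (π * x) ≤ 1 - π * x ^ 2 := by
  rw [← cos_abs, abs_mul, abs_of_pos pi_pos, ← sq_abs x]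
  set u := π * |x| / 2 with hu
  have hu0 : 0 ≤ u := by positivity
  have hu1 : u ≤ 4 / 5 := by rw [hu]; nlinarith [pi_lt_d2, abs_nonneg x]
  have hsin : u * (1 - u ^ 2 / 6) ≤ sin u := by linarith [sin_ge_sub_cube hu0]
  have hcos : cos (π * |x|) = 1 - 2 * sin u ^ 2 := by
    rw [← cos_two_mul_eq_one_sub, hu]; ring_nf
  have key : 2 ≤ π * (1 - u ^ 2 / 6) ^ 2 := by nlinarith [pi_gt_three]
  have hpx : π * |x| ^ 2 * π = 4 * u ^ 2 := by rw [hu]; ring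
  have hsq : (u * (1 - u ^ 2 / 6)) ^ 2 ≤ sin u ^ 2 :=
    pow_le_pow_left₀ (mul_nonneg hu0 (by nlinarith)) hsin 2
  rw [hcos]
  nlinarith [pi_pos, mul_le_mul_of_nonneg_left key (sq_nonneg u)]

lemma norm_eexp (x : ℝ) : ‖eexp x‖ = 1 := by
  rw [eexp, show 2 * (π : ℂ) * Complex.I * x = ((2 * π * x : ℝ) : ℂ) * Complex.I by push_cast; ring]
  exact Complex.norm_exp_ofReal_mul_I _

lemma eexp_sub_intCast (θ : ℝ) (n : ℤ) : eexp (θ - n) = eexp θ := by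
  rw [eexp, eexp, Complex.exp_eq_exp_iff_exists_int]; exact ⟨-n, by push_cast; ring⟩

lemma eexp_sum {ι : Type*} (s : Finset ι) (θ : ι → ℝ) :
    eexp (∑ i ∈ s, θ i) = ∏ i ∈ s, eexp (θ i) := by
  simp only [eexp, ← Complex.exp_sum, Complex.ofReal_sum, Finset.mul_sum]

lemma one_add_eexp (θ : ℝ) : 1 + eexp θ = eexp (θ / 2) * (2 * cos (π * θ)) := by
  rw [Complex.ofReal_cos, Complex.cos]
  simp only [eexp, mul_div_cancel₀ _ (two_ne_zero' ℂ), mul_add, ← Complex.exp_add]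
  push_cast
  ring_nf
  rw [Complex.exp_zero, add_comm]

lemma norm_one_add_eexp (θ : ℝ) : ‖1 + eexp θ‖ = 2 * |cos (π * θ)| := by
  rw [one_add_eexp, norm_mul, norm_eexp, one_mul, norm_mul, Complex.norm_two, Complex.norm_real,
    Real.norm_eq_abs]

lemma norm_one_add_eexp_le (θ : ℝ) :
    ‖1 + eexp θ‖ ≤ 2 * (1 - π * nearestIntDist θ ^ 2) := by
  have ht : |θ - round θ| ≤ 1 / 2 := abs_sub_round θ
  have hcos : 0 ≤ cos (π * (θ - round θ)) := by
    apply cos_nonneg_of_mem_Icc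
    constructor <;> nlinarith [abs_le.mp ht, pi_pos]
  rw [← eexp_sub_intCast θ (round θ), norm_one_add_eexp,
    abs_of_nonneg hcos, nearestIntDist, sq_abs]
  exact mul_le_mul_of_nonneg_left (cos_pi_mul_le_one_sub_pi_mul_sq ht) zero_le_two

theorem norm_sum_powerset_eexp_le {ι : Type*} (s : Finset ι) (θ : ι → ℝ) :
    ‖∑ t ∈ s.powerset, eexp (∑ i ∈ t, θ i)‖ ≤ ∏ i ∈ s, 2 * (1 - π * nearestIntDist (θ i) ^ 2) := by
  simp only [eexp_sum, ← prod_one_add, norm_prod]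
  exact prod_le_prod (fun i _ => norm_nonneg _) fun i _ => norm_one_add_eexp_le (θ i)

theorem exp_sum_digit_bound_general (b : ℕ) (k : ℤ) (r : ℕ) (γ : ℝ) :
    ‖(∑ S ∈ (Finset.range (r + 1)).powerset,
        eexp ((k : ℝ) * (∑ i ∈ S, (b : ℝ) ^ i) * γ))‖
      ≤ 2 ^ (r + 1) *
        ∏ d ∈ Finset.range (r + 1),
          (1 - Real.pi * (nearestIntDist ((k : ℝ) * (b : ℝ) ^ d * γ)) ^ 2) := by
  simp only [mul_sum, sum_mul]
  simpa only [prod_mul_distrib, prod_const, card_range]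
    using norm_sum_powerset_eexp_le (range (r + 1)) fun d => (k : ℝ) * (b : ℝ) ^ d * γ

/-- Summing over `D_b(r)` is the same as summing over subsets `S ⊆ {0,…,r}`,
with `j = ∑_{i ∈ S} b^i`. -/
theorem exp_sum_digit_bound (b : ℕ) (hb : 2 ≤ b) (k : ℤ) (r : ℕ) (γ : ℝ) :
    ‖(∑ S ∈ (Finset.range (r + 1)).powerset,
        eexp ((k : ℝ) * (∑ i ∈ S, (b : ℝ) ^ i) * γ))‖
      ≤ 2 ^ (r + 1) *
        ∏ d ∈ Finset.range (r + 1),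
          (1 - Real.pi * (nearestIntDist ((k : ℝ) * (b : ℝ) ^ d * γ)) ^ 2) :=
  exp_sum_digit_bound_general b k r γ
end

section
/- Let k and t be positive integers. If w is a sum of t (not necessarily distinct) nonnegative integer powers of b, then there exists c ∈ A(b,k,t) with w ≡ c (mod b^k − 1). -/
/-!
Reducing every exponent modulo `k` (as `b ^ k ≡ 1`) turns the sum of `t` powers into a vector of
`k` digit multiplicities with total `t`. While some multiplicity is at least `b`, replace `b`
copies of `b ^ j` by one copy of `b ^ ((j + 1) % k)`: the residue is unchanged and the total
drops by `b - 1 ≥ 1` but stays positive, so the process ends at genuine base-`b` digits.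
-/

open Finset

section

variable {b k : ℕ}

theorem pow_modEq_pow_mod (hb : 0 < b) (m : ℕ) : b ^ m ≡ b ^ (m % k) [MOD b ^ k - 1] := by
  have hbk : b ^ k ≡ 1 [MOD b ^ k - 1] := Nat.modEq_sub (Nat.one_le_pow _ _ hb)
  calc b ^ m = (b ^ k) ^ (m / k) * b ^ (m % k) := by rw [← pow_mul, ← pow_add, Nat.div_add_mod]
    _ ≡ 1 ^ (m / k) * b ^ (m % k) [MOD b ^ k - 1] := (hbk.pow _).mul_right _
    _ = b ^ (m % k) := by rw [one_pow, one_mul]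

theorem sum_add_piSingle_mul {ι R : Type*} [DecidableEq ι] [Semiring R] {s : Finset ι} {i : ι}
    (hi : i ∈ s) (c g : ι → R) (m : R) :
    ∑ x ∈ s, (c + Pi.single i m : ι → R) x * g x = ∑ x ∈ s, c x * g x + m * g i := by
  simp [add_mul, sum_add_distrib, Pi.single_apply, hi]

theorem sum_add_piSingle {ι M : Type*} [DecidableEq ι] [AddCommMonoid M] {s : Finset ι} {i : ι}
    (hi : i ∈ s) (c : ι → M) (m : M) :
    ∑ x ∈ s, (c + Pi.single i m : ι → M) x = ∑ x ∈ s, c x + m := by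
  simp [sum_add_distrib, hi]

theorem exists_sum_eq_card_and_sum_pow_modEq {ι : Type*} (hb : 0 < b) (hk : 0 < k)
    (s : Finset ι) (u : ι → ℕ) :
    ∃ a : ℕ → ℕ, ∑ j ∈ range k, a j = #s ∧
      ∑ d ∈ s, b ^ u d ≡ ∑ j ∈ range k, a j * b ^ j [MOD b ^ k - 1] := by
  have hmaps : ∀ d ∈ s, u d % k ∈ range k := fun d _ => mem_range.mpr (Nat.mod_lt _ hk)
  refine ⟨fun j => #{d ∈ s | u d % k = j}, (card_eq_sum_card_fiberwise hmaps).symm, ?_⟩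
  calc ∑ d ∈ s, b ^ u d ≡ ∑ d ∈ s, b ^ (u d % k) [MOD b ^ k - 1] :=
        Nat.ModEq.sum fun d _ => pow_modEq_pow_mod hb (u d)
    _ = ∑ j ∈ range k, #{d ∈ s | u d % k = j} * b ^ j := by
      rw [← sum_fiberwise_of_maps_to hmaps]
      refine sum_congr rfl fun j _ => ?_
      rw [sum_congr rfl fun d hd => by rw [(mem_filter.mp hd).2], sum_const, smul_eq_mul]

theorem exists_carry (hb : 0 < b) (a : ℕ → ℕ) {j : ℕ} (hj : j < k) (hja : b ≤ a j) :
    ∃ a' : ℕ → ℕ, ∑ i ∈ range k, a' i + b = ∑ i ∈ range k, a i + 1 ∧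
      ∑ i ∈ range k, a i * b ^ i ≡ ∑ i ∈ range k, a' i * b ^ i [MOD b ^ k - 1] := by
  set c := a - Pi.single j b
  have hac : a = c + Pi.single j b := by
    ext i
    by_cases hij : i = j
    · subst hij
      simp only [c, Pi.add_apply, Pi.sub_apply, Pi.single_eq_same]
      omega
    · simp [c, hij]
  have hj' : (j + 1) % k ∈ range k := mem_range.mpr (Nat.mod_lt _ (by omega))
  have hjk : j ∈ range k := mem_range.mpr hj
  refine ⟨c + Pi.single ((j + 1) % k) 1, ?_, ?_⟩
  · rw [hac, sum_add_piSingle hj', sum_add_piSingle hjk]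
    ring
  · rw [hac, sum_add_piSingle_mul hj', sum_add_piSingle_mul hjk, ← pow_succ', one_mul]
    exact (Nat.ModEq.refl _).add (pow_modEq_pow_mod hb _)

theorem exists_digits_modEq (hb : 2 ≤ b) (a : ℕ → ℕ) (ha : 0 < ∑ j ∈ range k, a j) :
    ∃ a' : ℕ → ℕ, (∀ j < k, a' j ≤ b - 1) ∧
      0 < ∑ j ∈ range k, a' j ∧ ∑ j ∈ range k, a' j ≤ ∑ j ∈ range k, a j ∧
      ∑ j ∈ range k, a j * b ^ j ≡ ∑ j ∈ range k, a' j * b ^ j [MOD b ^ k - 1] := by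
  induction h : ∑ j ∈ range k, a j using Nat.strong_induction_on generalizing a with
  | _ n ih =>
    by_cases hdigits : ∀ j < k, a j ≤ b - 1
    · exact ⟨a, hdigits, h ▸ ha, h.le, .refl _⟩
    push Not at hdigits
    obtain ⟨j, hj, hja⟩ := hdigits
    have hjn : a j ≤ n := h ▸ single_le_sum (fun _ _ => Nat.zero_le _) (mem_range.mpr hj)
    obtain ⟨a', hsum, hmod⟩ := exists_carry (b := b) (by omega) a hj (by omega)
    obtain ⟨a'', hdig, hpos, hle, hmod'⟩ :=
      ih (∑ i ∈ range k, a' i) (by omega) a' (by omega) rfl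
    exact ⟨a'', hdig, hpos, by omega, hmod.trans hmod'⟩

end

/-- Any sum of `t` nonnegative-integer powers of `b` is congruent mod `b^k - 1`
to an element of `A(b,k,t)`. -/
theorem power_sum_congruent_to_A (b k t : ℕ) (hb : 2 ≤ b) (hk : 0 < k) (ht : 0 < t)
    (u : ℕ → ℕ) :
    ∃ a : ℕ → ℕ, (∀ j < k, a j ≤ b - 1) ∧
      0 < (∑ j ∈ Finset.range k, a j) ∧ (∑ j ∈ Finset.range k, a j) ≤ t ∧
      (∑ d ∈ Finset.range t, b ^ u d) ≡ (∑ j ∈ Finset.range k, a j * b ^ j)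
        [MOD b ^ k - 1] := by
  obtain ⟨a₀, hsum, hmod⟩ :=
    exists_sum_eq_card_and_sum_pow_modEq (b := b) (by omega) hk (range t) u
  rw [card_range] at hsum
  obtain ⟨a, hdigits, hpos, hle, hmod'⟩ := exists_digits_modEq hb a₀ (hsum ▸ ht)
  exact ⟨a, hdigits, hpos, hsum ▸ hle, hmod.trans hmod'⟩
end

section
/- Let t be the largest integer with 1 + b + ⋯ + b^t ≤ N and let P = {1 + b + ⋯ + b^d : 0 ≤ d ≤ t} be the set of repunits in base b up to N. Then for every real γ there exists n ∈ D_b with 1 ≤ n ≤ N and ‖γn‖ ≤ 1/(t+1). -/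
/-- `n` is a positive integer all of whose base-`b` digits lie in `{0,1}`. -/
def InDb (b n : ℕ) : Prop := n ≠ 0 ∧ ∀ d ∈ Nat.digits b n, d ≤ 1

/-!
Sort the fractional parts of `γ R_0, …, γ R_{t+1}`, where `R_m = 1 + b + ⋯ + b^(m-1)`, into
the `t + 1` intervals `[a/(t+1), (a+1)/(t+1))`. Two of them, `i < j`, share an interval, so
`‖γ (R_j - R_i)‖ < 1/(t+1)`; and `R_j - R_i = b^i R_{j-i}` has base-`b` digits `0^i 1^(j-i)`
and is at most `R_{t+1} ≤ N`.
-/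

open Finset

def repunit (b m : ℕ) : ℕ := ∑ j ∈ range m, b ^ j

section Repunit

variable {b : ℕ}

theorem repunit_succ (b m : ℕ) : repunit b (m + 1) = 1 + b * repunit b m := by
  simp only [repunit, sum_range_succ', pow_zero, pow_succ', mul_sum, add_comm]

theorem repunit_add (b i k : ℕ) : repunit b (i + k) = repunit b i + b ^ i * repunit b k := by
  simp only [repunit, sum_range_add, pow_add, mul_sum]

theorem repunit_mono (b : ℕ) : Monotone (repunit b) := fun _ _ h =>
  sum_le_sum_of_subset (range_subset_range.mpr h)

theorem repunit_pos {m : ℕ} (hm : 0 < m) : 0 < repunit b m := by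
  obtain ⟨m, rfl⟩ := Nat.exists_eq_add_of_lt hm
  rw [zero_add, repunit_succ]
  omega

theorem digits_repunit (hb : 2 ≤ b) (m : ℕ) : Nat.digits b (repunit b m) = List.replicate m 1 := by
  induction m with
  | zero => simp [repunit]
  | succ m ih =>
    rw [repunit_succ, Nat.digits_add b hb 1 _ (by omega) (Or.inl one_ne_zero), ih,
      List.replicate_succ]

theorem inDb_pow_mul_repunit (hb : 2 ≤ b) (i : ℕ) {k : ℕ} (hk : 0 < k) :
    InDb b (b ^ i * repunit b k) := by
  refine ⟨(mul_pos (by positivity) (repunit_pos hk)).ne', fun d hd => ?_⟩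
  rw [Nat.digits_base_pow_mul hb (repunit_pos hk), digits_repunit hb, List.mem_append] at hd
  rcases hd with hd | hd <;> simp [List.eq_of_mem_replicate hd]

end Repunit

theorem nearestIntDist_sub_le_abs_fract_sub (x y : ℝ) :
    nearestIntDist (x - y) ≤ |Int.fract x - Int.fract y| := by
  have h : x - y - ((⌊x⌋ - ⌊y⌋ : ℤ) : ℝ) = Int.fract x - Int.fract y := by
    push_cast [Int.fract]
    ring
  exact h ▸ round_le (x - y) (⌊x⌋ - ⌊y⌋)

theorem exists_lt_nearestIntDist_sub_lt (y : ℕ → ℝ) {n : ℕ} (hn : 0 < n) :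
    ∃ i j, i < j ∧ j ≤ n ∧ nearestIntDist (y j - y i) < 1 / n := by
  have hn' : (0 : ℝ) < n := by exact_mod_cast hn
  set box : ℕ → ℤ := fun m => ⌊Int.fract (y m) * n⌋
  have hbox : ∀ m ∈ range (n + 1), box m ∈ Ico (0 : ℤ) n := fun m _ =>
    mem_Ico.mpr ⟨Int.floor_nonneg.mpr (mul_nonneg (Int.fract_nonneg _) hn'.le),
      Int.floor_lt.mpr (by exact_mod_cast mul_lt_of_lt_one_left hn' (Int.fract_lt_one _))⟩
  obtain ⟨i, hi, j, hj, hij, hbox_eq⟩ := exists_ne_map_eq_of_card_lt_of_maps_to (by simp) hbox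
  suffices close : ∀ i j, box i = box j → nearestIntDist (y j - y i) < 1 / n by
    rcases hij.lt_or_gt with h | h
    · exact ⟨i, j, h, Nat.lt_succ_iff.mp (mem_range.mp hj), close i j hbox_eq⟩
    · exact ⟨j, i, h, Nat.lt_succ_iff.mp (mem_range.mp hi), close j i hbox_eq.symm⟩
  intro i j h
  have hlt := Int.abs_sub_lt_one_of_floor_eq_floor h.symm
  rw [← sub_mul, abs_mul, abs_of_pos hn', ← lt_div_iff₀ hn'] at hlt
  exact (nearestIntDist_sub_le_abs_fract_sub _ _).trans_lt hlt

theorem repunit_pigeonhole_general (b : ℕ) (hb : 2 ≤ b) (N : ℕ) (t : ℕ)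
    (ht : (∑ j ∈ Finset.range (t + 1), b ^ j) ≤ N) (γ : ℝ) :
    ∃ n : ℕ, InDb b n ∧ 1 ≤ n ∧ n ≤ N ∧
      nearestIntDist (γ * (n : ℝ)) ≤ 1 / ((t : ℝ) + 1) := by
  obtain ⟨i, j, hij, hj, hclose⟩ :=
    exists_lt_nearestIntDist_sub_lt (fun m => γ * repunit b m) t.succ_pos
  obtain ⟨k, rfl⟩ := Nat.exists_eq_add_of_lt hij
  have hn := inDb_pow_mul_repunit hb i k.add_one_pos
  have hsplit : repunit b (i + k + 1) = repunit b i + b ^ i * repunit b (k + 1) :=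
    repunit_add b i (k + 1)
  have hle : repunit b (i + k + 1) ≤ N := (repunit_mono b hj).trans ht
  refine ⟨_, hn, Nat.one_le_iff_ne_zero.mpr hn.1, by omega, ?_⟩
  have hcast : γ * ((b ^ i * repunit b (k + 1) : ℕ) : ℝ) =
      γ * repunit b (i + k + 1) - γ * repunit b i := by
    rw [hsplit]
    push_cast
    ring
  rw [hcast]
  exact_mod_cast hclose.le

/-- If `t` is the largest integer with `1 + b + ⋯ + b^t ≤ N`, then for every
real `γ` there is `n ∈ D_b` with `1 ≤ n ≤ N` and `‖γn‖ ≤ 1/(t+1)`. -/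
theorem repunit_pigeonhole (b : ℕ) (hb : 2 ≤ b) (N : ℕ) (hN : 1 ≤ N) (t : ℕ)
    (ht : (∑ j ∈ Finset.range (t + 1), b ^ j) ≤ N)
    (ht' : N < ∑ j ∈ Finset.range (t + 2), b ^ j) (γ : ℝ) :
    ∃ n : ℕ, InDb b n ∧ 1 ≤ n ∧ n ≤ N ∧
      nearestIntDist (γ * (n : ℝ)) ≤ 1 / ((t : ℝ) + 1) :=
  repunit_pigeonhole_general b hb N t ht γ
end
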